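/- In a CAT(0) metric space, the sum of the (Alexandrov) angles of any geodesic triangle with distinct vertices is at most π. -/

import Mathlib

/-- A (unit-speed) geodesic segment from `x` to `y`, defined on `[0, dist x y]`. -/
def IsGeodesic {X : Type*} [MetricSpace X] (x y : X) (γ : ℝ → X) : Prop :=
  γ 0 = x ∧ γ (dist x y) = y ∧
    ∀ s ∈ Set.Icc (0:ℝ) (dist x y), ∀ t ∈ Set.Icc (0:ℝ) (dist x y),
      dist (γ s) (γ t) = |s - t|

/-- A geodesic metric space: every pair of points is joined by a geodesic. -/
def GeodesicSpace (X : Type*) [MetricSpace X] : Prop :=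
  ∀ x y : X, ∃ γ : ℝ → X, IsGeodesic x y γ

/-- The CAT(0) comparison axiom: for every geodesic triangle and every comparison
triangle in the Euclidean plane with the same side lengths, distances from the third
vertex to points of a side are bounded by the corresponding Euclidean distances. -/
def CAT0 (X : Type*) [MetricSpace X] : Prop :=
  GeodesicSpace X ∧
    ∀ (x₁ x₂ x₃ : X) (γ : ℝ → X), IsGeodesic x₁ x₂ γ →
      ∀ x₁' x₂' x₃' : EuclideanSpace ℝ (Fin 2),
        dist x₁' x₂' = dist x₁ x₂ → dist x₁' x₃' = dist x₁ x₃ →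
        dist x₂' x₃' = dist x₂ x₃ →
        ∀ t ∈ Set.Icc (0:ℝ) (dist x₁ x₂),
          dist x₃ (γ t) ≤ dist x₃' (x₁' + (t / dist x₁ x₂) • (x₂' - x₁'))

/-- The Euclidean comparison angle at `p` of the triple `(p, a, b)`, given by the
law of cosines. -/
noncomputable def compAngle {X : Type*} [MetricSpace X] (p a b : X) : ℝ :=
  Real.arccos ((dist p a ^ 2 + dist p b ^ 2 - dist a b ^ 2) /
    (2 * dist p a * dist p b))

/-- The Alexandrov (upper) angle at `p` between two geodesics `γ₁, γ₂` issuing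
from `p`: the limsup of comparison angles of small triangles at `p`. -/
noncomputable def alexAngle {X : Type*} [MetricSpace X] (p : X) (γ₁ γ₂ : ℝ → X) : ℝ :=
  Filter.limsup (fun t => compAngle p (γ₁ t) (γ₂ t)) (nhdsWithin (0:ℝ) (Set.Ioi 0))

/-!
Through a Euclidean comparison triangle and Stewart's identity, the CAT(0) inequality becomes
the Bruhat–Tits inequality
`d(z, γ t)² ≤ (1 - s) d(x, z)² + s d(y, z)² - s (1 - s) d(x, y)²`, `s = t / d(x, y)`,
for a geodesic `γ` from `x` to `y`. Applied once along each of two sides issuing from `p`, it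
bounds the distance between the points at distance `t` from `p` by `2 t² (1 - cos α)`, where
`α` is the comparison angle at `p`; so all small comparison angles, hence the Alexandrov angle,
are at most `α`. The three comparison angles of a triangle sum to `π`, being the angles of its
Euclidean comparison triangle.
-/

open Real EuclideanGeometry

lemma exists_euclidean_triangle {d e f : ℝ} (hd : 0 ≤ d) (he : 0 ≤ e) (hf : 0 ≤ f)
    (hde : f ≤ d + e) (hdf : e ≤ d + f) (hef : d ≤ e + f) :
    ∃ p q r : EuclideanSpace ℝ (Fin 2), dist p q = d ∧ dist p r = e ∧ dist q r = f := by
  -- `x` is the abscissa of the third vertex given by the law of cosines.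
  obtain ⟨x, hx, hxe⟩ : ∃ x, 2 * d * x = d ^ 2 + e ^ 2 - f ^ 2 ∧ x ^ 2 ≤ e ^ 2 := by
    rcases hd.eq_or_lt with rfl | hd_pos
    · exact ⟨0, by nlinarith, by nlinarith⟩
    refine ⟨(d ^ 2 + e ^ 2 - f ^ 2) / (2 * d), by field_simp, ?_⟩
    rw [div_pow, div_le_iff₀ (by positivity : (0 : ℝ) < (2 * d) ^ 2)]
    nlinarith [mul_nonneg (mul_nonneg (sub_nonneg.2 hef) (sub_nonneg.2 hdf))
      (mul_nonneg (sub_nonneg.2 hde) (add_nonneg (add_nonneg hd he) hf))]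
  have hy : √(e ^ 2 - x ^ 2) ^ 2 = e ^ 2 - x ^ 2 := Real.sq_sqrt (sub_nonneg.2 hxe)
  refine ⟨!₂[0, 0], !₂[d, 0], !₂[x, √(e ^ 2 - x ^ 2)], ?_, ?_, ?_⟩ <;>
    simp only [EuclideanSpace.dist_eq, Fin.sum_univ_two, Matrix.cons_val_zero, Matrix.cons_val_one,
      Matrix.cons_val_fin_one, dist_zero, dist_self, norm_eq_abs, sq_abs, ne_eq,
      OfNat.ofNat_ne_zero, not_false_eq_true, zero_pow, add_zero]
  · exact Real.sqrt_sq hd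
  · rw [hy, add_sub_cancel, Real.sqrt_sq he]
  · rw [Real.dist_eq, sq_abs, hy, show (d - x) ^ 2 + (e ^ 2 - x ^ 2) = f ^ 2 by
      linear_combination -hx, Real.sqrt_sq hf]

lemma exists_comparison_triangle {X : Type*} [MetricSpace X] (x y z : X) :
    ∃ p q r : EuclideanSpace ℝ (Fin 2),
      dist p q = dist x y ∧ dist p r = dist x z ∧ dist q r = dist y z :=
  exists_euclidean_triangle dist_nonneg dist_nonneg dist_nonneg (dist_triangle_left y z x)
    (dist_triangle x y z) (dist_triangle_right x y z)

lemma dist_add_smul_sub_sq {V : Type*} [NormedAddCommGroup V] [InnerProductSpace ℝ V]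
    (a b c : V) (s : ℝ) :
    dist c (a + s • (b - a)) ^ 2 =
      (1 - s) * dist a c ^ 2 + s * dist b c ^ 2 - s * (1 - s) * dist a b ^ 2 := by
  have hc : c - (a + s • (b - a)) = (1 - s) • (c - a) + s • (c - b) := by
    simp only [sub_smul, one_smul, smul_sub]; abel
  have hab : a - b = (c - b) - (c - a) := by abel
  rw [dist_eq_norm, hc, dist_eq_norm', dist_eq_norm', dist_eq_norm, hab, norm_add_sq_real,
    norm_sub_sq_real (c - b), norm_smul, norm_smul, real_inner_smul_left, real_inner_smul_right,
    real_inner_comm (c - a) (c - b)]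
  simp only [Real.norm_eq_abs, mul_pow, sq_abs]
  ring

lemma compAngle_congr {X Y : Type*} [MetricSpace X] [MetricSpace Y] {p q r : X} {p' q' r' : Y}
    (hpq : dist p' q' = dist p q) (hpr : dist p' r' = dist p r) (hqr : dist q' r' = dist q r) :
    compAngle p' q' r' = compAngle p q r := by
  rw [compAngle, compAngle, hpq, hpr, hqr]

lemma compAngle_eq_angle {V P : Type*} [NormedAddCommGroup V] [InnerProductSpace ℝ V]
    [MetricSpace P] [NormedAddTorsor V P] (p q r : P) : compAngle p q r = ∠ q p r := by
  rw [compAngle, EuclideanGeometry.angle, InnerProductGeometry.angle,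
    real_inner_eq_norm_mul_self_add_norm_mul_self_sub_norm_sub_mul_self_div_two,
    vsub_sub_vsub_cancel_right, dist_comm p q, dist_comm p r, dist_eq_norm_vsub V q p,
    dist_eq_norm_vsub V r p, dist_eq_norm_vsub V q r]
  congr 1
  ring

lemma compAngle_add_compAngle_add_compAngle {X : Type*} [MetricSpace X] {x y : X} (hxy : x ≠ y)
    (z : X) : compAngle x y z + compAngle y z x + compAngle z x y = π := by
  obtain ⟨p, q, r, hpq, hpr, hqr⟩ := exists_comparison_triangle x y z
  have hqp : q ≠ p := by rw [← dist_pos, dist_comm, hpq]; exact dist_pos.2 hxy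
  have hp : compAngle p q r = compAngle x y z := compAngle_congr hpq hpr hqr
  have hq : compAngle q r p = compAngle y z x :=
    compAngle_congr hqr (by rw [dist_comm, hpq, dist_comm]) (by rw [dist_comm, hpr, dist_comm])
  have hr : compAngle r p q = compAngle z x y :=
    compAngle_congr (by rw [dist_comm, hpr, dist_comm]) (by rw [dist_comm, hqr, dist_comm]) hpq
  rw [← hp, ← hq, ← hr, compAngle_eq_angle, compAngle_eq_angle, compAngle_eq_angle,
    angle_comm q p r, angle_comm r q p, angle_comm p r q]
  linarith [angle_add_angle_add_angle_eq_pi r hqp]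

section Geodesic

variable {X : Type*} [MetricSpace X] {x y : X} {γ : ℝ → X}

lemma IsGeodesic.dist_left (hγ : IsGeodesic x y γ) {t : ℝ} (ht : t ∈ Set.Icc 0 (dist x y)) :
    dist x (γ t) = t := by
  rw [← hγ.1, hγ.2.2 0 ⟨le_rfl, ht.1.trans ht.2⟩ t ht, zero_sub, abs_neg, abs_of_nonneg ht.1]

lemma IsGeodesic.reverse (hγ : IsGeodesic x y γ) :
    IsGeodesic y x (fun t => γ (dist x y - t)) := by
  refine ⟨by simpa using hγ.2.1, by simpa [dist_comm] using hγ.1, fun s hs t ht => ?_⟩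
  rw [dist_comm y x] at hs ht
  rw [hγ.2.2 _ ⟨by linarith [hs.2], by linarith [hs.1]⟩ _ ⟨by linarith [ht.2], by linarith [ht.1]⟩,
    abs_sub_comm]
  congr 1
  ring

theorem CAT0.dist_sq_le_of_isGeodesic (hX : CAT0 X) (hγ : IsGeodesic x y γ) (z : X) {t : ℝ}
    (ht : t ∈ Set.Icc 0 (dist x y)) :
    dist z (γ t) ^ 2 ≤ (1 - t / dist x y) * dist x z ^ 2 + t / dist x y * dist y z ^ 2 -
      t / dist x y * (1 - t / dist x y) * dist x y ^ 2 := by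
  obtain ⟨p, q, r, hpq, hpr, hqr⟩ := exists_comparison_triangle x y z
  calc dist z (γ t) ^ 2 ≤ dist r (p + (t / dist x y) • (q - p)) ^ 2 :=
        pow_le_pow_left₀ dist_nonneg (hX.2 x y z γ hγ p q r hpq hpr hqr t ht) 2
    _ = _ := by rw [dist_add_smul_sub_sq, hpq, hpr, hqr]

end Geodesic

section Angle

variable {X : Type*} [MetricSpace X] {p q r : X} {γ₁ γ₂ : ℝ → X}

theorem CAT0.compAngle_le_of_isGeodesic (hX : CAT0 X) (hγ₁ : IsGeodesic p q γ₁)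
    (hγ₂ : IsGeodesic p r γ₂) {t : ℝ} (ht : 0 < t) (htq : t ≤ dist p q) (htr : t ≤ dist p r) :
    compAngle p (γ₁ t) (γ₂ t) ≤ compAngle p q r := by
  set E := (dist p q ^ 2 + dist p r ^ 2 - dist q r ^ 2) / (2 * dist p q * dist p r)
  have hq : 0 < dist p q := ht.trans_le htq
  have hr : 0 < dist p r := ht.trans_le htr
  have hu : dist p (γ₁ t) = t := hγ₁.dist_left ⟨ht.le, htq⟩
  have hv : dist p (γ₂ t) = t := hγ₂.dist_left ⟨ht.le, htr⟩
  have hru : dist r (γ₁ t) ^ 2 ≤ dist p r ^ 2 - 2 * t * dist p r * E + t ^ 2 := by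
    refine (hX.dist_sq_le_of_isGeodesic hγ₁ r ⟨ht.le, htq⟩).trans_eq ?_
    simp only [E]
    field_simp
    ring
  have huv : dist (γ₁ t) (γ₂ t) ^ 2 ≤ 2 * t ^ 2 * (1 - E) := by
    set s := t / dist p r
    have hs : 0 ≤ s := by positivity
    calc dist (γ₁ t) (γ₂ t) ^ 2
        ≤ (1 - s) * t ^ 2 + s * dist r (γ₁ t) ^ 2 - s * (1 - s) * dist p r ^ 2 := by
          simpa only [hu] using hX.dist_sq_le_of_isGeodesic hγ₂ (γ₁ t) ⟨ht.le, htr⟩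
      _ ≤ (1 - s) * t ^ 2 + s * (dist p r ^ 2 - 2 * t * dist p r * E + t ^ 2)
          - s * (1 - s) * dist p r ^ 2 := by gcongr
      _ = 2 * t ^ 2 * (1 - E) := by simp only [s]; field_simp; ring
  rw [compAngle, hu, hv]
  refine arccos_le_arccos ?_
  rw [le_div_iff₀ (by positivity)]
  nlinarith

theorem CAT0.alexAngle_le_compAngle (hX : CAT0 X) (hpq : p ≠ q) (hpr : p ≠ r)
    (hγ₁ : IsGeodesic p q γ₁) (hγ₂ : IsGeodesic p r γ₂) :
    alexAngle p γ₁ γ₂ ≤ compAngle p q r := by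
  refine Filter.limsup_le_of_le (Filter.isCoboundedUnder_le_of_le _ fun _ => arccos_nonneg _) ?_
  filter_upwards [Ioc_mem_nhdsGT (lt_min (dist_pos.2 hpq) (dist_pos.2 hpr))] with t ht
  exact hX.compAngle_le_of_isGeodesic hγ₁ hγ₂ ht.1 (ht.2.trans (min_le_left _ _))
    (ht.2.trans (min_le_right _ _))

end Angle

/-- In a CAT(0) metric space, the sum of the Alexandrov angles of any geodesic
triangle with distinct vertices is at most `π`. Here `a, b, c` are the sides of the
triangle, and the angle at each vertex is taken between the outgoing side and the
reversal of the incoming side. -/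
theorem cat0_angle_sum_le_pi {X : Type*} [MetricSpace X] (hX : CAT0 X)
    (x₁ x₂ x₃ : X) (h₁₂ : x₁ ≠ x₂) (h₂₃ : x₂ ≠ x₃) (h₁₃ : x₁ ≠ x₃)
    (a b c : ℝ → X)
    (ha : IsGeodesic x₁ x₂ a) (hb : IsGeodesic x₂ x₃ b) (hc : IsGeodesic x₃ x₁ c) :
    alexAngle x₁ a (fun t => c (dist x₃ x₁ - t)) +
      alexAngle x₂ b (fun t => a (dist x₁ x₂ - t)) +
      alexAngle x₃ c (fun t => b (dist x₂ x₃ - t)) ≤ Real.pi := by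
  have h₁ := hX.alexAngle_le_compAngle h₁₂ h₁₃ ha hc.reverse
  have h₂ := hX.alexAngle_le_compAngle h₂₃ h₁₂.symm hb ha.reverse
  have h₃ := hX.alexAngle_le_compAngle h₁₃.symm h₂₃.symm hc hb.reverse
  linarith [compAngle_add_compAngle_add_compAngle h₁₂ x₃]
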